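/- Let K be a nonempty compact convex set. Then A_lsc(K) is strongly co-atomic: for every g ∈ A_lsc(K), g is the greatest lower bound in A_lsc(K) of the set S = {q ∈ A_lsc(K) : q is a co-extremal vector of A_lsc(K) and g ≤ q pointwise}; that is, g ≤ q for every q ∈ S, and every h ∈ A_lsc(K) with h ≤ q for all q ∈ S satisfies h ≤ g. -/

import Mathlib

/-!
For an extreme point `e` of `K`, the function equal to `c ∈ (0, ∞)` at `e` and to `∞` elsewhere is
co-extremal, and it majorizes `g` when `c = g e`; so a lower bound `h` of the co-extremal majorants
of `g` satisfies `h ≤ g` on `∂ₑK`. To pass to all of `K`, separate points below the graph of `h`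
from its closed convex epigraph (Hahn–Banach): `h` is the supremum of its continuous affine
minorants `a`. Each `a` is `≤ g` on `∂ₑK`, hence on `K` by Bauer's minimum principle: the
minimizers of the lsc affine function `g + (sup a - a)` form a compact extreme subset of `K`,
which contains an extreme point of `K` by Krein–Milman.
-/

open Set
open scoped ENNReal Classical

noncomputable section

/-- `f : K → [0,∞]` is affine on `K` (with the convention `0 · ∞ = 0`). -/
def IsAffineOnE {E : Type*} [AddCommGroup E] [Module ℝ E] (K : Set E) (f : K → ℝ≥0∞) : Prop :=
  ∀ (x y : K) (t : ℝ), 0 ≤ t → t ≤ 1 →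
    ∀ h : t • (x : E) + (1 - t) • (y : E) ∈ K,
      f ⟨t • (x : E) + (1 - t) • (y : E), h⟩
        = ENNReal.ofReal t * f x + ENNReal.ofReal (1 - t) * f y

/-- Membership in `A_lsc(K)`: lower semicontinuous affine functions `K → (0,∞]`. -/
def MemAlsc {E : Type*} [AddCommGroup E] [Module ℝ E] [TopologicalSpace E]
    (K : Set E) (f : K → ℝ≥0∞) : Prop :=
  LowerSemicontinuous f ∧ IsAffineOnE K f ∧ ∀ x : K, 0 < f x

/-- The function `I^∞_ψ`, equal to `1` at `ψ` and `∞` elsewhere. -/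
def Iinf {E : Type*} [AddCommGroup E] [Module ℝ E]
    (K : Set E) (ψ : E) (hψ : ψ ∈ K) : K → ℝ≥0∞ :=
  fun x => if (x : E) = ψ then 1 else ∞

/-- `q` is a co-extremal vector of the cone `A_lsc(K)`. -/
def CoExtremalLsc {E : Type*} [AddCommGroup E] [Module ℝ E] [TopologicalSpace E]
    (K : Set E) (q : K → ℝ≥0∞) : Prop :=
  MemAlsc K q ∧
    {f : K → ℝ≥0∞ | MemAlsc K f ∧ q ≤ f}
      = {f : K → ℝ≥0∞ | ∃ t : ℝ≥0∞, 1 ≤ t ∧ f = fun x => t * q x}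

/-- The extended gauge `M(f,g) = inf {μ ∈ (0,∞] : f ≤ μ·g}`. -/
def MgaugeE {E : Type*} [AddCommGroup E] [Module ℝ E] {K : Set E}
    (f g : K → ℝ≥0∞) : ℝ≥0∞ :=
  sInf {m : ℝ≥0∞ | 0 < m ∧ ∀ x : K, f x ≤ m * g x}

section Affine

variable {E : Type*} [AddCommGroup E] [Module ℝ E] {K : Set E} {e : E} {f g : K → ℝ≥0∞}

lemma IsAffineOnE.apply_eq_of_eq (hf : IsAffineOnE K f) {x y z : K} {t : ℝ} (ht₀ : 0 ≤ t)
    (ht₁ : t ≤ 1) (hz : (z : E) = t • (x : E) + (1 - t) • (y : E)) :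
    f z = ENNReal.ofReal t * f x + ENNReal.ofReal (1 - t) * f y := by
  obtain ⟨z, hzK⟩ := z
  subst hz
  exact hf x y t ht₀ ht₁ hzK

lemma IsAffineOnE.add (hf : IsAffineOnE K f) (hg : IsAffineOnE K g) :
    IsAffineOnE K fun x => f x + g x := by
  intro x y t ht₀ ht₁ hz
  simp only [hf x y t ht₀ ht₁ hz, hg x y t ht₀ ht₁ hz]
  ring

lemma isAffineOnE_ofReal (a : E →ᵃ[ℝ] ℝ) (ha : ∀ x : K, 0 ≤ a x) :
    IsAffineOnE K fun x => ENNReal.ofReal (a x) := by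
  intro x y t ht₀ ht₁ _
  have ht₁' : 0 ≤ 1 - t := sub_nonneg.2 ht₁
  dsimp only
  rw [Convex.combo_affine_apply (add_sub_cancel t 1), smul_eq_mul, smul_eq_mul,
    ENNReal.ofReal_add (mul_nonneg ht₀ (ha x)) (mul_nonneg ht₁' (ha y)),
    ENNReal.ofReal_mul ht₀, ENNReal.ofReal_mul ht₁']

lemma IsAffineOnE.le_of_mem_openSegment (hf : IsAffineOnE K f) {x₁ x₂ x : K} {m : ℝ≥0∞}
    (hx : (x : E) ∈ openSegment ℝ (x₁ : E) x₂) (hxm : f x ≤ m) (hm : m ≤ f x₂) : f x₁ ≤ m := by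
  obtain ⟨a, b, ha, hb, hab, hx⟩ := hx
  obtain rfl : b = 1 - a := by linarith
  rcases eq_or_ne m ∞ with rfl | hm_top
  · exact le_top
  have ha' : ENNReal.ofReal a ≠ 0 := by simpa using ha
  refine (ENNReal.mul_le_mul_iff_right ha' ENNReal.ofReal_ne_top).1
    (ENNReal.le_of_add_le_add_right (a := ENNReal.ofReal (1 - a) * m)
      (ENNReal.mul_ne_top ENNReal.ofReal_ne_top hm_top) ?_)
  calc ENNReal.ofReal a * f x₁ + ENNReal.ofReal (1 - a) * m
      ≤ ENNReal.ofReal a * f x₁ + ENNReal.ofReal (1 - a) * f x₂ := by gcongr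
    _ = f x := (hf.apply_eq_of_eq ha.le (by linarith) hx.symm).symm
    _ ≤ m := hxm
    _ = ENNReal.ofReal a * m + ENNReal.ofReal (1 - a) * m := by
      rw [← add_mul, ← ENNReal.ofReal_add ha.le hb.le, add_sub_cancel, ENNReal.ofReal_one,
        one_mul]

lemma IsAffineOnE.isExtreme_image_setOf_le (hf : IsAffineOnE K f) {m : ℝ≥0∞}
    (hm : ∀ x, m ≤ f x) : IsExtreme ℝ K ((↑) '' {x : K | f x ≤ m}) := by
  refine ⟨image_subset_iff.2 fun x _ => x.2, ?_⟩
  rintro x₁ hx₁ x₂ hx₂ _ ⟨x, hxm, rfl⟩ hx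
  exact ⟨⟨x₁, hx₁⟩, hf.le_of_mem_openSegment (x₂ := ⟨x₂, hx₂⟩) hx hxm (hm _), rfl⟩

lemma isAffineOnE_ite_eq (he : e ∈ K.extremePoints ℝ) (c : ℝ≥0∞) :
    IsAffineOnE K fun x : K => if (x : E) = e then c else ∞ := by
  intro x y t ht₀ ht₁ hz
  rcases ht₀.eq_or_lt with rfl | ht₀
  · simp
  rcases ht₁.eq_or_lt with rfl | ht₁
  · simp
  have ht₀' : ENNReal.ofReal t ≠ 0 := by simpa using ht₀
  have ht₁' : ENNReal.ofReal (1 - t) ≠ 0 := by simpa using ht₁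
  by_cases hze : t • (x : E) + (1 - t) • (y : E) = e
  · have hseg : e ∈ openSegment ℝ (x : E) y := ⟨t, 1 - t, ht₀, by linarith, by ring, hze⟩
    have hx : (x : E) = e := he.2 x.2 y.2 hseg
    have hy : (y : E) = e := he.2 y.2 x.2 (openSegment_symm ℝ (x : E) y ▸ hseg)
    dsimp only
    rw [if_pos hze, if_pos hx, if_pos hy, ← add_mul, ← ENNReal.ofReal_add ht₀.le (by linarith),
      add_sub_cancel, ENNReal.ofReal_one, one_mul]
  · have hxy : (x : E) ≠ e ∨ (y : E) ≠ e := by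
      by_contra! hxy
      apply hze
      rw [hxy.1, hxy.2, ← add_smul, add_sub_cancel, one_smul]
    rcases hxy with hx | hy
    · simp [hze, hx, ENNReal.mul_top ht₀']
    · simp [hze, hy, ENNReal.mul_top ht₁']

end Affine

section Bauer

variable {E : Type*} [AddCommGroup E] [Module ℝ E] [TopologicalSpace E] [T2Space E]
  [IsTopologicalAddGroup E] [ContinuousSMul ℝ E] [LocallyConvexSpace ℝ E]
  {K : Set E} {f g : K → ℝ≥0∞}

lemma IsAffineOnE.exists_extremePoint_forall_le [Nonempty K] (hK : IsCompact K)
    (hf : IsAffineOnE K f) (hf_lsc : LowerSemicontinuous f) :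
    ∃ e : K, (e : E) ∈ K.extremePoints ℝ ∧ ∀ x, f e ≤ f x := by
  have : CompactSpace K := isCompact_iff_compactSpace.1 hK
  obtain ⟨z, -, hz⟩ :=
    (hf_lsc.lowerSemicontinuousOn univ).exists_isMinOn univ_nonempty isCompact_univ
  have hzmin : ∀ x, f z ≤ f x := fun x => hz (mem_univ x)
  set F : Set E := (↑) '' {x : K | f x ≤ f z}
  have hF : IsCompact F := (hf_lsc.isClosed_preimage (f z)).isCompact.image continuous_subtype_val
  obtain ⟨_, ⟨e, hez, rfl⟩, he⟩ := hF.extremePoints_nonempty ⟨z, z, le_refl (f z), rfl⟩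
  refine ⟨e, ?_, fun x => (hez : f e ≤ f z).trans (hzmin x)⟩
  exact (hf.isExtreme_image_setOf_le hzmin).extremePoints_subset_extremePoints ⟨⟨e, hez, rfl⟩, he⟩

lemma IsAffineOnE.ofReal_le_of_forall_extremePoints (hK : IsCompact K) (hg : IsAffineOnE K g)
    (hg_lsc : LowerSemicontinuous g) (a : E →ᴬ[ℝ] ℝ)
    (hext : ∀ e : K, (e : E) ∈ K.extremePoints ℝ → ENNReal.ofReal (a e) ≤ g e) (x : K) :
    ENNReal.ofReal (a x) ≤ g x := by
  have : Nonempty K := ⟨x⟩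
  obtain ⟨B, hB⟩ := hK.bddAbove_image a.continuous.continuousOn
  have hBa : ∀ y : K, 0 ≤ B - a y := fun y => sub_nonneg.2 (hB ⟨y, y.2, rfl⟩)
  -- `g + (B - a)` is an `ℝ≥0∞`-valued stand-in for `g - a`.
  set ψ : K → ℝ≥0∞ := fun y => g y + ENNReal.ofReal (B - a y)
  have hψ : IsAffineOnE K ψ :=
    hg.add (isAffineOnE_ofReal (AffineMap.const ℝ E B - (a : E →ᵃ[ℝ] ℝ)) hBa :)
  have hψ_lsc : LowerSemicontinuous ψ := hg_lsc.add <| (ENNReal.continuous_ofReal.comp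
    (continuous_const.sub (a.continuous.comp continuous_subtype_val))).lowerSemicontinuous
  obtain ⟨e, he, hmin⟩ := hψ.exists_extremePoint_forall_le hK hψ_lsc
  have hBψ : ENNReal.ofReal B ≤ ψ x :=
    calc ENNReal.ofReal B ≤ ENNReal.ofReal (a e) + ENNReal.ofReal (B - a e) := by
          simpa using ENNReal.ofReal_add_le (p := a e) (q := B - a e)
      _ ≤ g e + ENNReal.ofReal (B - a e) := by gcongr; exact hext e he
      _ ≤ ψ x := hmin x
  rcases le_total (a x) 0 with hax | hax
  · simp [ENNReal.ofReal_of_nonpos hax]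
  refine ENNReal.le_of_add_le_add_right (a := ENNReal.ofReal (B - a x)) ENNReal.ofReal_ne_top ?_
  rwa [← ENNReal.ofReal_add hax (hBa x), add_sub_cancel]

end Bauer

section Epigraph

variable {E : Type*} {K : Set E} {h : K → ℝ≥0∞}

-- `0 ≤ s` follows from `h x ≤ s` as `h ≥ 0`; it is stated because `ENNReal.ofReal` sends
-- negative reals to `0`.
def epigraphOn (K : Set E) (h : K → ℝ≥0∞) : Set (E × ℝ) :=
  {p | ∃ hp : p.1 ∈ K, 0 ≤ p.2 ∧ h ⟨p.1, hp⟩ ≤ ENNReal.ofReal p.2}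

lemma isClosed_epigraphOn [TopologicalSpace E] (hK : IsClosed K) (hh : LowerSemicontinuous h) :
    IsClosed (epigraphOn K h) := by
  have heq : epigraphOn K h =
      Prod.map (↑) id '' {p : K × ℝ | 0 ≤ p.2 ∧ h p.1 ≤ ENNReal.ofReal p.2} := by
    ext ⟨z, s⟩
    simp [epigraphOn]
  rw [heq]
  refine (hK.isClosedEmbedding_subtypeVal.prodMap .id).isClosedMap _ <|
    (isClosed_le continuous_const continuous_snd).inter ?_
  exact hh.isClosed_epigraph.preimage (continuous_id.prodMap ENNReal.continuous_ofReal)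

lemma convex_epigraphOn [AddCommGroup E] [Module ℝ E] (hK : Convex ℝ K) (hh : IsAffineOnE K h) :
    Convex ℝ (epigraphOn K h) := by
  rintro ⟨x, s⟩ ⟨hx, hs, hxs⟩ ⟨y, t⟩ ⟨hy, ht, hyt⟩ a b ha hb hab
  obtain rfl : b = 1 - a := by linarith
  refine ⟨hK hx hy ha hb hab, by simp only [Prod.snd_add, Prod.smul_snd, smul_eq_mul]; positivity,
    ?_⟩
  simp only [Prod.fst_add, Prod.smul_fst, Prod.snd_add, Prod.smul_snd, smul_eq_mul] at *
  rw [hh.apply_eq_of_eq (x := ⟨x, hx⟩) (y := ⟨y, hy⟩) ha (by linarith) rfl,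
    ENNReal.ofReal_add (by positivity) (by positivity), ENNReal.ofReal_mul ha,
    ENNReal.ofReal_mul hb]
  gcongr

lemma IsAffineOnE.exists_affine_minorant_lt [AddCommGroup E] [Module ℝ E] [TopologicalSpace E]
    [IsTopologicalAddGroup E] [ContinuousSMul ℝ E] [LocallyConvexSpace ℝ E]
    (hK : IsClosed K) (hKc : Convex ℝ K) (hh : IsAffineOnE K h) (hh_lsc : LowerSemicontinuous h)
    {x₀ : K} {c : ℝ} (hc : ENNReal.ofReal c < h x₀) :
    ∃ a : E →ᴬ[ℝ] ℝ, (∀ x : K, ENNReal.ofReal (a x) ≤ h x) ∧ c < a x₀ := by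
  by_cases htop : ∀ x, h x = ∞
  · exact ⟨ContinuousAffineMap.const ℝ E (c + 1), fun x => by simp [htop x], by simp⟩
  push Not at htop
  obtain ⟨x₁, hx₁⟩ := htop
  have hx₀ : ((x₀ : E), c) ∉ epigraphOn K h := fun ⟨_, _, hle⟩ => hc.not_ge hle
  obtain ⟨L, u, hL, hLx₀⟩ :=
    geometric_hahn_banach_closed_point (convex_epigraphOn hKc hh) (isClosed_epigraphOn hK hh_lsc)
      hx₀
  set ℓ : E →L[ℝ] ℝ := L.comp (.inl ℝ E ℝ)
  set α : ℝ := L (0, 1)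
  have hL_apply (z : E) (s : ℝ) : L (z, s) = ℓ z + s * α := by
    rw [show ((z, s) : E × ℝ) = (z, 0) + s • (0, 1) by simp, map_add, map_smul, smul_eq_mul]
    rfl
  have hsep (y : K) (s : ℝ) (hs : 0 ≤ s) (hys : h y ≤ ENNReal.ofReal s) : ℓ y + s * α < u := by
    simpa [hL_apply] using hL ((y : E), s) ⟨y.2, hs, hys⟩
  rw [hL_apply] at hLx₀
  -- `h x₁ < ∞`, so the epigraph contains a vertical half-line.
  have hα : α ≤ 0 := by
    by_contra! hα
    set r₁ := (h x₁).toReal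
    have hr₁ : 0 ≤ r₁ := ENNReal.toReal_nonneg
    have := hsep x₁ (r₁ + |u - ℓ x₁| / α) (by positivity)
      ((ENNReal.ofReal_toReal hx₁).ge.trans
        (ENNReal.ofReal_le_ofReal (le_add_of_nonneg_right (by positivity))))
    rw [add_mul, div_mul_cancel₀ _ hα.ne'] at this
    linarith [le_abs_self (u - ℓ x₁), mul_nonneg hr₁ hα.le]
  -- Tilting the separating hyperplane makes it non-vertical.
  obtain ⟨ε, hε, hcε⟩ := exists_pos_mul_lt (sub_pos.2 hLx₀) c
  set β := ε - α
  have hβ : 0 < β := by linarith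
  refine ⟨β⁻¹ • (ℓ.toContinuousAffineMap - ContinuousAffineMap.const ℝ E u), fun y => ?_, ?_⟩
  · rcases eq_or_ne (h y) ∞ with hy | hy
    · simp [hy]
    have hs : 0 ≤ (h y).toReal := ENNReal.toReal_nonneg
    have := hsep y _ hs (ENNReal.ofReal_toReal hy).ge
    rw [← ENNReal.ofReal_toReal hy]
    refine ENNReal.ofReal_le_ofReal ?_
    simp only [ContinuousAffineMap.smul_apply, ContinuousAffineMap.sub_apply,
      ContinuousLinearMap.coe_toContinuousAffineMap, ContinuousAffineMap.coe_const,
      Function.const_apply, smul_eq_mul]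
    rw [inv_mul_le_iff₀ hβ]
    linarith [mul_nonneg hs hε.le]
  · simp only [ContinuousAffineMap.smul_apply, ContinuousAffineMap.sub_apply,
      ContinuousLinearMap.coe_toContinuousAffineMap, ContinuousAffineMap.coe_const,
      Function.const_apply, smul_eq_mul]
    rw [lt_inv_mul_iff₀ hβ]
    linarith

end Epigraph

lemma IsAffineOnE.le_of_forall_extremePoints {E : Type*} [AddCommGroup E] [Module ℝ E]
    [TopologicalSpace E] [T2Space E] [IsTopologicalAddGroup E] [ContinuousSMul ℝ E]
    [LocallyConvexSpace ℝ E] {K : Set E} {g h : K → ℝ≥0∞} (hK : IsCompact K) (hKc : Convex ℝ K)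
    (hg : IsAffineOnE K g) (hg_lsc : LowerSemicontinuous g)
    (hh : IsAffineOnE K h) (hh_lsc : LowerSemicontinuous h)
    (hext : ∀ x : K, (x : E) ∈ K.extremePoints ℝ → h x ≤ g x) : h ≤ g := by
  intro x
  refine ENNReal.le_of_forall_nnreal_lt fun r hr => ?_
  obtain ⟨a, ha, hra⟩ :=
    hh.exists_affine_minorant_lt hK.isClosed hKc hh_lsc (c := r) (by simpa using hr)
  calc (r : ℝ≥0∞) = ENNReal.ofReal r := (ENNReal.ofReal_coe_nnreal).symm
    _ ≤ ENNReal.ofReal (a x) := ENNReal.ofReal_le_ofReal hra.le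
    _ ≤ g x := hg.ofReal_le_of_forall_extremePoints hK hg_lsc a
      (fun e he => (ha e).trans (hext e he)) x

lemma lowerSemicontinuous_ite_eq {E : Type*} [TopologicalSpace E] [T1Space E] {K : Set E} (e : E)
    (c : ℝ≥0∞) :
    LowerSemicontinuous fun x : K => if (x : E) = e then c else ∞ := by
  intro x b hb
  by_cases hx : (x : E) = e
  · exact .of_forall fun y => hb.trans_le (by simp only [hx, if_true]; split_ifs <;> simp)
  · filter_upwards [(isOpen_compl_singleton.preimage continuous_subtype_val).mem_nhds hx]
      with y hy
    simpa [show (y : E) ≠ e from hy, hx] using hb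

section CoExtremal

variable {E : Type*} [AddCommGroup E] [Module ℝ E] [TopologicalSpace E] [T1Space E] {K : Set E}
  {e : E}

lemma memAlsc_ite_eq (he : e ∈ K.extremePoints ℝ) {c : ℝ≥0∞} (hc : c ≠ 0) :
    MemAlsc K fun x : K => if (x : E) = e then c else ∞ := by
  refine ⟨lowerSemicontinuous_ite_eq e c, isAffineOnE_ite_eq he c, fun x => ?_⟩
  dsimp only
  split_ifs <;> simp [pos_iff_ne_zero, hc]

-- The function below is `c • Iinf K e _`.
lemma coExtremalLsc_ite_eq (he : e ∈ K.extremePoints ℝ) {c : ℝ≥0∞} (hc₀ : c ≠ 0)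
    (hc : c ≠ ∞) : CoExtremalLsc K fun x : K => if (x : E) = e then c else ∞ := by
  refine ⟨memAlsc_ite_eq he hc₀, ext fun f => ⟨?_, ?_⟩⟩
  · rintro ⟨-, hf⟩
    have hfe : c ≤ f ⟨e, he.1⟩ := by simpa using hf ⟨e, he.1⟩
    refine ⟨f ⟨e, he.1⟩ / c, (ENNReal.le_div_iff_mul_le (.inl hc₀) (.inl hc)).2 (by simpa), ?_⟩
    funext x
    by_cases hx : (x : E) = e
    · obtain rfl : x = ⟨e, he.1⟩ := Subtype.ext hx
      simp [ENNReal.div_mul_cancel hc₀ hc]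
    · have hfx : f x = ∞ := top_le_iff.1 (by simpa [hx] using hf x)
      have : f ⟨e, he.1⟩ / c ≠ 0 := by
        simpa [ENNReal.div_eq_zero_iff, hc] using (pos_iff_ne_zero.2 hc₀).trans_le hfe |>.ne'
      simp [hx, hfx, ENNReal.mul_top this]
  · rintro ⟨t, ht, rfl⟩
    have ht₀ : t ≠ 0 := (one_pos.trans_le ht).ne'
    have hmul : (fun x : K => t * if (x : E) = e then c else ∞) =
        fun x : K => if (x : E) = e then t * c else ∞ := by
      funext x
      split_ifs <;> simp [ENNReal.mul_top ht₀]
    refine ⟨hmul ▸ memAlsc_ite_eq he (mul_ne_zero ht₀ hc₀), fun x => ?_⟩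
    exact le_mul_of_one_le_left zero_le ht

lemma le_of_forall_coExtremalLsc_le {g h : K → ℝ≥0∞} (hg : MemAlsc K g)
    (hh : ∀ q, CoExtremalLsc K q → g ≤ q → h ≤ q) (x : K) (hx : (x : E) ∈ K.extremePoints ℝ) :
    h x ≤ g x := by
  rcases eq_or_ne (g x) ∞ with hgx | hgx
  · exact hgx ▸ le_top
  have hq := coExtremalLsc_ite_eq hx (hg.2.2 x).ne' hgx
  have hgq : g ≤ fun y : K => if (y : E) = x then g x else ∞ := fun y => by
    dsimp only
    split_ifs with hy
    · rw [Subtype.ext hy]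
    · exact le_top
  simpa using hh _ hq hgq x

end CoExtremal

theorem statement16_general
    {E : Type*}
    [AddCommGroup E] [Module ℝ E] [TopologicalSpace E] [IsTopologicalAddGroup E]
    [ContinuousSMul ℝ E] [T2Space E] [LocallyConvexSpace ℝ E]
    (K : Set E) (hKcp : IsCompact K) (hKcv : Convex ℝ K)
    (g : K → ℝ≥0∞) (hg : MemAlsc K g) :
    (∀ q : K → ℝ≥0∞, CoExtremalLsc K q → g ≤ q → g ≤ q) ∧
    ∀ h : K → ℝ≥0∞, MemAlsc K h →
      (∀ q : K → ℝ≥0∞, CoExtremalLsc K q → g ≤ q → h ≤ q) → h ≤ g :=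
  ⟨fun _ _ hgq => hgq, fun _ hh hhq => hg.2.1.le_of_forall_extremePoints hKcp hKcv hg.1 hh.2.1 hh.1
    (le_of_forall_coExtremalLsc_le hg hhq)⟩

theorem statement16
    {E : Type*}
    [AddCommGroup E] [Module ℝ E] [TopologicalSpace E] [IsTopologicalAddGroup E]
    [ContinuousSMul ℝ E] [T2Space E] [LocallyConvexSpace ℝ E]
    (K : Set E) (hKne : K.Nonempty) (hKcp : IsCompact K) (hKcv : Convex ℝ K)
    (g : K → ℝ≥0∞) (hg : MemAlsc K g) :
    (∀ q : K → ℝ≥0∞, CoExtremalLsc K q → g ≤ q → g ≤ q) ∧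
    ∀ h : K → ℝ≥0∞, MemAlsc K h →
      (∀ q : K → ℝ≥0∞, CoExtremalLsc K q → g ≤ q → h ≤ q) → h ≤ g :=
  statement16_general K hKcp hKcv g hg
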